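/- For CTL*: φ is satisfiable if and only if the single-variable formula φ* = σ(Θ ∧ φ') is satisfiable, where σ substitutes Bᵢ = EX Aᵢ (one-variable formulas built from the chain models) for each variable pᵢ, i = 1,...,n+1. -/

import Mathlib

/-- Serial Kripke models. -/
structure Kripke (S : Type) where
  rel : S → S → Prop
  serial : ∀ s, ∃ t, rel s t
  val : ℕ → S → Prop

def isPath {S : Type} (M : Kripke S) (π : ℕ → S) : Prop :=
  ∀ i, M.rel (π i) (π (i + 1))

mutual
/-- CTL* state formulas. -/
inductive SF : Type where
  | var : ℕ → SF
  | bot : SF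
  | imp : SF → SF → SF
  | all : PF → SF
/-- CTL* path formulas. -/
inductive PF : Type where
  | st : SF → PF
  | imp : PF → PF → PF
  | unt : PF → PF → PF
  | next : PF → PF
end

def SF.neg (φ : SF) : SF := .imp φ .bot
def PF.neg (ϑ : PF) : PF := .imp ϑ (.st .bot)
def PF.top : PF := PF.neg (.st .bot)
/-- □ϑ = ¬(⊤ U ¬ϑ). -/
def PF.box (ϑ : PF) : PF := PF.neg (.unt PF.top (PF.neg ϑ))
/-- ∃ϑ = ¬∀¬ϑ. -/
def SF.exa (ϑ : PF) : SF := SF.neg (.all (PF.neg ϑ))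
def SF.conj (φ ψ : SF) : SF := SF.neg (.imp φ (SF.neg ψ))
def SF.iffc (φ ψ : SF) : SF := SF.conj (.imp φ ψ) (.imp ψ φ)
/-- AG φ = ∀□φ. -/
def SF.ag (φ : SF) : SF := .all (PF.box (.st φ))
/-- EX φ = ∃Xφ. -/
def SF.ex (φ : SF) : SF := SF.exa (.next (.st φ))

mutual
/-- Satisfaction of state formulas at states. -/
def ssat {S : Type} (M : Kripke S) : SF → S → Prop
  | .var n, s => M.val n s
  | .bot, _ => False
  | .imp a b, s => ssat M a s → ssat M b s
  | .all ϑ, s => ∀ π : ℕ → S, isPath M π → π 0 = s → psat M ϑ π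
/-- Satisfaction of path formulas on paths. -/
def psat {S : Type} (M : Kripke S) : PF → (ℕ → S) → Prop
  | .st φ, π => ssat M φ (π 0)
  | .imp a b, π => psat M a π → psat M b π
  | .unt a b, π => ∃ i, psat M b (fun j => π (i + j)) ∧
      ∀ j, j < i → psat M a (fun l => π (j + l))
  | .next a, π => psat M a (fun j => π (j + 1))
end

def ssatisfiable (φ : SF) : Prop := ∃ (S : Type) (M : Kripke S) (s : S), ssat M φ s

mutual
def soccurs (q : ℕ) : SF → Prop
  | .var n => n = q
  | .bot => False
  | .imp a b => soccurs q a ∨ soccurs q b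
  | .all ϑ => poccurs q ϑ
def poccurs (q : ℕ) : PF → Prop
  | .st φ => soccurs q φ
  | .imp a b => poccurs q a ∨ poccurs q b
  | .unt a b => poccurs q a ∨ poccurs q b
  | .next a => poccurs q a
end

mutual
/-- The path-relativizing translation ·' with guard variable q:
(∀α)' = ∀(□q → α'), homomorphic elsewhere. -/
def srel (q : ℕ) : SF → SF
  | .var n => .var n
  | .bot => .bot
  | .imp a b => .imp (srel q a) (srel q b)
  | .all ϑ => .all (.imp (PF.box (.st (.var q))) (prel q ϑ))
def prel (q : ℕ) : PF → PF
  | .st φ => .st (srel q φ)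
  | .imp a b => .imp (prel q a) (prel q b)
  | .unt a b => .unt (prel q a) (prel q b)
  | .next a => .next (prel q a)
end

/-- Θ = q ∧ AG(EX q ↔ q). -/
def ThetaS (q : ℕ) : SF :=
  SF.conj (.var q) (SF.ag (SF.iffc (SF.ex (.var q)) (.var q)))

/-- χ₀ = ∀□p, χ_{k+1} = p ∧ EX(¬p ∧ EX χ_k); p is var 0. -/
def chiS : ℕ → SF
  | 0 => SF.ag (.var 0)
  | k + 1 => SF.conj (.var 0) (SF.ex (SF.conj (SF.neg (.var 0)) (SF.ex (chiS k))))

/-- A_m = χ_m ∧ EX AG ¬p. -/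
def AformS (m : ℕ) : SF := SF.conj (chiS m) (SF.ex (SF.ag (SF.neg (.var 0))))

/-- B_m = EX A_m. -/
def BformS (m : ℕ) : SF := SF.ex (AformS m)

mutual
/-- The substitution σ : pᵢ ↦ Bᵢ for 1 ≤ i ≤ n+1. -/
def sigmaS (n : ℕ) : SF → SF
  | .var i => if 1 ≤ i ∧ i ≤ n + 1 then BformS i else .var i
  | .bot => .bot
  | .imp a b => .imp (sigmaS n a) (sigmaS n b)
  | .all ϑ => .all (sigmaP n ϑ)
def sigmaP (n : ℕ) : PF → PF
  | .st φ => .st (sigmaS n φ)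
  | .imp a b => .imp (sigmaP n a) (sigmaP n b)
  | .unt a b => .unt (sigmaP n a) (sigmaP n b)
  | .next a => .next (sigmaP n a)
end

/-!
Satisfaction of `σ ψ` in a model is satisfaction of `ψ` once each `pᵢ` is reinterpreted as `Bᵢ`.
The translation `φ'` only quantifies over paths on which the guard `q = p_{n+1}` holds forever, so
`φ'` holds at a state iff `φ` holds there in the submodel of `q`-states; `Θ` makes the reachable
`q`-states a serial submodel. Conversely, a model of `φ` is extended by one chain per index `i`
(the chain of `χ_i`), entered from a state exactly when `pᵢ` holds there or `i = n + 1`; in the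
extension `Bᵢ` is true precisely at the old states satisfying `pᵢ`, and the guard at all of them.
-/
namespace Kripke

variable {S : Type} (M : Kripke S)

noncomputable def pathFrom (s : S) : ℕ → S
  | 0 => s
  | k + 1 => (M.serial (pathFrom s k)).choose

theorem isPath_pathFrom (s : S) : isPath M (M.pathFrom s) :=
  fun k => (M.serial (M.pathFrom s k)).choose_spec

variable {M}

theorem isPath_cons {s : S} {π : ℕ → S} (hs : M.rel s (π 0)) (hπ : isPath M π) :
    isPath M (Stream'.cons s π)
  | 0 => hs
  | k + 1 => hπ k

theorem exists_path_of_reflTransGen {s t : S} (h : Relation.ReflTransGen M.rel s t) :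
    ∃ π, isPath M π ∧ π 0 = s ∧ ∃ i, π i = t := by
  induction h using Relation.ReflTransGen.head_induction_on with
  | refl => exact ⟨M.pathFrom t, M.isPath_pathFrom t, rfl, 0, rfl⟩
  | head hss' _ ih =>
    obtain ⟨π, hπ, rfl, i, rfl⟩ := ih
    exact ⟨Stream'.cons _ π, isPath_cons hss' hπ, rfl, i + 1, rfl⟩

theorem reflTransGen_of_isPath {π : ℕ → S} (hπ : isPath M π) (i : ℕ) :
    Relation.ReflTransGen M.rel (π 0) (π i) := by
  induction i with
  | zero => exact .refl
  | succ k ih => exact ih.tail (hπ k)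

end Kripke

section Semantics

variable {S : Type} {M : Kripke S}

@[simp] theorem ssat_var {i : ℕ} {s : S} : ssat M (.var i) s ↔ M.val i s := by rw [ssat]

@[simp] theorem ssat_imp {a b : SF} {s : S} :
    ssat M (.imp a b) s ↔ (ssat M a s → ssat M b s) := by rw [ssat]

@[simp] theorem ssat_neg {φ : SF} {s : S} : ssat M (SF.neg φ) s ↔ ¬ ssat M φ s := by
  simp [SF.neg, ssat]

@[simp] theorem ssat_conj {φ ψ : SF} {s : S} :
    ssat M (SF.conj φ ψ) s ↔ ssat M φ s ∧ ssat M ψ s := by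
  simp [SF.conj]

@[simp] theorem ssat_iffc {φ ψ : SF} {s : S} :
    ssat M (SF.iffc φ ψ) s ↔ (ssat M φ s ↔ ssat M ψ s) := by
  simp [SF.iffc, iff_def]

@[simp] theorem ssat_ex {φ : SF} {s : S} :
    ssat M (SF.ex φ) s ↔ ∃ t, M.rel s t ∧ ssat M φ t := by
  simp only [SF.ex, SF.exa, PF.neg, ssat_neg, ssat, psat]
  constructor
  · intro h
    by_contra! h'
    exact h fun π hπ h0 => h' (π 1) (h0 ▸ hπ 0)
  · rintro ⟨t, hst, ht⟩ h
    exact h _ (Kripke.isPath_cons hst (M.isPath_pathFrom t)) rfl ht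

theorem psat_box_st {φ : SF} {π : ℕ → S} :
    psat M (PF.box (.st φ)) π ↔ ∀ i, ssat M φ (π i) := by
  simp [PF.box, PF.neg, PF.top, psat, ssat]

theorem ssat_ag {φ : SF} {s : S} :
    ssat M (SF.ag φ) s ↔ ∀ t, Relation.ReflTransGen M.rel s t → ssat M φ t := by
  simp only [SF.ag, ssat, psat_box_st]
  constructor
  · intro h t hst
    obtain ⟨π, hπ, h0, i, rfl⟩ := Kripke.exists_path_of_reflTransGen hst
    exact h π hπ h0 i
  · rintro h π hπ rfl i
    exact h _ (Kripke.reflTransGen_of_isPath hπ i)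

theorem ssat_thetaS {q : ℕ} {s : S} :
    ssat M (ThetaS q) s ↔ M.val q s ∧ ∀ t, Relation.ReflTransGen M.rel s t →
      ((∃ u, M.rel t u ∧ M.val q u) ↔ M.val q t) := by
  simp [ThetaS, ssat_ag]

end Semantics

section Substitution

variable {S : Type}

def Kripke.sigmaModel (n : ℕ) (M : Kripke S) : Kripke S :=
  { M with val := fun i => ssat M (sigmaS n (.var i)) }

variable (n : ℕ) (M : Kripke S)

mutual
theorem ssat_sigmaS : ∀ (φ : SF) (s : S), ssat M (sigmaS n φ) s ↔ ssat (M.sigmaModel n) φ s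
  | .var i, s => by simp only [ssat]; rfl
  | .bot, s => by simp only [ssat, sigmaS]
  | .imp a b, s => by simp only [ssat, sigmaS, ssat_sigmaS a, ssat_sigmaS b]
  | .all ϑ, s => by
      simp only [ssat, sigmaS, psat_sigmaP ϑ]
      rfl

theorem psat_sigmaP : ∀ (ϑ : PF) (π : ℕ → S), psat M (sigmaP n ϑ) π ↔ psat (M.sigmaModel n) ϑ π
  | .st φ, π => by simp only [psat, sigmaP, ssat_sigmaS φ]
  | .imp a b, π => by simp only [psat, sigmaP, psat_sigmaP a, psat_sigmaP b]
  | .unt a b, π => by simp only [psat, sigmaP, psat_sigmaP a, psat_sigmaP b]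
  | .next a, π => by simp only [psat, sigmaP, psat_sigmaP a]
end

end Substitution

theorem exists_lift_of_lift_rel {S₁ S₂ : Type} {r₁ : S₁ → S₁ → Prop} {r₂ : S₂ → S₂ → Prop}
    {f : S₁ → S₂} (hlift : ∀ s u, r₂ (f s) u → ∃ t, r₁ s t ∧ f t = u)
    {ρ : ℕ → S₂} (hρ : ∀ i, r₂ (ρ i) (ρ (i + 1))) {s : S₁} (h0 : ρ 0 = f s) :
    ∃ π : ℕ → S₁, π 0 = s ∧ (∀ i, r₁ (π i) (π (i + 1))) ∧ f ∘ π = ρ := by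
  have hlift' : ∀ s u, ∃ t, r₂ (f s) u → r₁ s t ∧ f t = u := by
    intro s u
    by_cases h : r₂ (f s) u
    · exact (hlift s u h).imp fun _ ht _ => ht
    · exact ⟨s, fun h' => absurd h' h⟩
  choose g hg using hlift'
  let π : ℕ → S₁ := fun k => Nat.rec s (fun k t => g t (ρ (k + 1))) k
  have hπ : ∀ k, f (π k) = ρ k ∧ r₁ (π k) (π (k + 1)) := by
    intro k
    induction k with
    | zero => exact ⟨h0.symm, (hg _ _ (h0 ▸ hρ 0)).1⟩
    | succ k ih =>
      have hfk : f (π (k + 1)) = ρ (k + 1) := (hg _ _ (ih.1 ▸ hρ k)).2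
      exact ⟨hfk, (hg _ _ (hfk ▸ hρ (k + 1))).1⟩
  exact ⟨π, rfl, fun k => (hπ k).2, funext fun k => (hπ k).1⟩

/-- A p-morphism from `M₁` onto the submodel of `M₂` spanned by its `q`-states. -/
structure Kripke.IsGuardedMorphism {S₁ S₂ : Type} (M₁ : Kripke S₁) (M₂ : Kripke S₂) (q : ℕ)
    (f : S₁ → S₂) : Prop where
  map_rel : ∀ s t, M₁.rel s t → M₂.rel (f s) (f t)
  lift_rel : ∀ s u, M₂.rel (f s) u → M₂.val q u → ∃ t, M₁.rel s t ∧ f t = u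
  val_guard : ∀ s, M₂.val q (f s)

namespace Kripke.IsGuardedMorphism

variable {S₁ S₂ : Type} {M₁ : Kripke S₁} {M₂ : Kripke S₂} {q : ℕ} {f : S₁ → S₂}

theorem isPath_comp (hf : M₁.IsGuardedMorphism M₂ q f) {π : ℕ → S₁} (hπ : isPath M₁ π) :
    isPath M₂ (f ∘ π) :=
  fun i => hf.map_rel _ _ (hπ i)

theorem exists_lift_path (hf : M₁.IsGuardedMorphism M₂ q f) {ρ : ℕ → S₂} (hρ : isPath M₂ ρ)
    (hq : ∀ i, M₂.val q (ρ i)) {s : S₁} (h0 : ρ 0 = f s) :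
    ∃ π, π 0 = s ∧ isPath M₁ π ∧ f ∘ π = ρ :=
  exists_lift_of_lift_rel (r₂ := fun u v => M₂.rel u v ∧ M₂.val q v)
    (fun s u h => hf.lift_rel s u h.1 h.2) (fun i => ⟨hρ i, hq (i + 1)⟩) h0

mutual
theorem ssat_srel_iff (hf : M₁.IsGuardedMorphism M₂ q f) :
    ∀ φ : SF, (∀ i, soccurs i φ → ∀ s, M₁.val i s ↔ M₂.val i (f s)) →
      ∀ s, ssat M₁ φ s ↔ ssat M₂ (srel q φ) (f s)
  | .var i, h, s => h i rfl s
  | .bot, _, s => Iff.rfl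
  | .imp a b, h, s => by
      simp only [ssat, srel]
      rw [hf.ssat_srel_iff a (fun i hi => h i (Or.inl hi)) s,
        hf.ssat_srel_iff b (fun i hi => h i (Or.inr hi)) s]
  | .all ϑ, h, s => by
      simp only [ssat, srel, psat, psat_box_st]
      constructor
      · rintro hϑ ρ hρ h0 hq
        obtain ⟨π, rfl, hπ, rfl⟩ := hf.exists_lift_path hρ hq h0
        exact (hf.psat_prel_iff ϑ h π hπ).1 (hϑ π hπ rfl)
      · rintro hϑ π hπ rfl
        exact (hf.psat_prel_iff ϑ h π hπ).2
          (hϑ _ (hf.isPath_comp hπ) rfl fun i => hf.val_guard (π i))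

theorem psat_prel_iff (hf : M₁.IsGuardedMorphism M₂ q f) :
    ∀ ϑ : PF, (∀ i, poccurs i ϑ → ∀ s, M₁.val i s ↔ M₂.val i (f s)) →
      ∀ π, isPath M₁ π → (psat M₁ ϑ π ↔ psat M₂ (prel q ϑ) (f ∘ π))
  | .st φ, h, π, _ => hf.ssat_srel_iff φ h (π 0)
  | .imp a b, h, π, hπ => by
      simp only [psat, prel]
      rw [hf.psat_prel_iff a (fun i hi => h i (Or.inl hi)) π hπ,
        hf.psat_prel_iff b (fun i hi => h i (Or.inr hi)) π hπ]
  | .unt a b, h, π, hπ => by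
      simp only [psat, prel]
      exact exists_congr fun i => and_congr
        (hf.psat_prel_iff b (fun i hi => h i (Or.inr hi)) _ fun j => hπ (i + j))
        (forall₂_congr fun j _ =>
          hf.psat_prel_iff a (fun i hi => h i (Or.inl hi)) _ fun l => hπ (j + l))
  | .next a, h, π, hπ => hf.psat_prel_iff a h _ fun j => hπ (j + 1)
end

end Kripke.IsGuardedMorphism

def Kripke.restrict {S : Type} (M : Kripke S) (Q : S → Prop)
    (hQ : ∀ s, Q s → ∃ t, Q t ∧ M.rel s t) : Kripke {s // Q s} where
  rel a b := M.rel a b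
  serial a := let ⟨t, hQt, hat⟩ := hQ a a.2; ⟨⟨t, hQt⟩, hat⟩
  val i a := M.val i a

theorem Kripke.isGuardedMorphism_restrict {S : Type} {M : Kripke S} {Q : S → Prop}
    (hQ : ∀ s, Q s → ∃ t, Q t ∧ M.rel s t) {q : ℕ} (hQq : ∀ s, Q s → M.val q s)
    (hQrel : ∀ s t, Q s → M.rel s t → M.val q t → Q t) :
    (M.restrict Q hQ).IsGuardedMorphism M q Subtype.val where
  map_rel _ _ h := h
  lift_rel s u hsu hu := ⟨⟨u, hQrel s u s.2 hsu hu⟩, hsu, rfl⟩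
  val_guard s := hQq s s.2

theorem ssatisfiable_of_ssat_thetaS_srel {S : Type} {M : Kripke S} {q : ℕ} {φ : SF} {s : S}
    (hΘ : ssat M (ThetaS q) s) (hφ : ssat M (srel q φ) s) : ssatisfiable φ := by
  obtain ⟨hqs, hstep⟩ := ssat_thetaS.1 hΘ
  let Q t := M.val q t ∧ Relation.ReflTransGen M.rel s t
  have hQ : ∀ t, Q t → ∃ u, Q u ∧ M.rel t u := by
    rintro t ⟨hqt, hst⟩
    obtain ⟨u, htu, hqu⟩ := (hstep t hst).2 hqt
    exact ⟨u, ⟨hqu, hst.tail htu⟩, htu⟩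
  have hf := Kripke.isGuardedMorphism_restrict hQ (fun _ h => h.1)
    fun _ _ h htu hqu => ⟨hqu, h.2.tail htu⟩
  exact ⟨_, M.restrict Q hQ, ⟨s, hqs, .refl⟩,
    (hf.ssat_srel_iff φ (fun _ _ _ => Iff.rfl) _).2 hφ⟩

theorem ssat_ag_of_invariant {S : Type} {M : Kripke S} {φ : SF} {P : S → Prop} {s : S}
    (hs : P s) (hP : ∀ t u, P t → M.rel t u → P u) (hφ : ∀ t, P t → ssat M φ t) :
    ssat M (SF.ag φ) s :=
  ssat_ag.2 fun t hst => hφ t <| by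
    induction hst with
    | refl => exact hs
    | tail _ htu ih => exact hP _ _ ih htu

inductive ChainState (S : Type) : Type
  | base (s : S)
  | head (m : ℕ)
  | up (k : ℕ)
  | down (k : ℕ)
  | sink

namespace ChainState

variable {S : Type} (M : Kripke S) (L : ℕ → S → Prop)

inductive Step : ChainState S → ChainState S → Prop
  | base {s t : S} : M.rel s t → Step (base s) (base t)
  | enter {s : S} {i : ℕ} : L i s → Step (base s) (head i)
  | head_down (k : ℕ) : Step (head (k + 1)) (down k)
  | head_sink (m : ℕ) : Step (head m) sink
  | up_down (k : ℕ) : Step (up (k + 1)) (down k)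
  | up_zero : Step (up 0) (up 0)
  | down_up (k : ℕ) : Step (down k) (up k)
  | sink : Step sink sink

def IsP : ChainState S → Prop
  | head _ => True
  | up _ => True
  | _ => False

/-- The model `M` extended by one chain per `m`: a base state `s` sees the chain head `head m`
iff `L m s`, and `head (k+1) → down k → up k → down (k-1) → ⋯ → up 0 ↺` alternates `p` and
`¬p`, so that `χ_k` holds exactly at `up k` and `head k`; only heads also see the `¬p` sink,
which is what `A_m` adds to `χ_m`. -/
def model : Kripke (ChainState S) where
  rel := Step M L
  serial
    | base s => let ⟨t, hst⟩ := M.serial s; ⟨base t, .base hst⟩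
    | head m => ⟨sink, .head_sink m⟩
    | up 0 => ⟨up 0, .up_zero⟩
    | up (k + 1) => ⟨down k, .up_down k⟩
    | down k => ⟨up k, .down_up k⟩
    | sink => ⟨sink, .sink⟩
  val i x := i = 0 ∧ IsP x

variable {M L}

@[simp] theorem ssat_p {x : ChainState S} : ssat (model M L) (.var 0) x ↔ IsP x := by
  simp [model]

theorem ssat_chiS {k : ℕ} {x : ChainState S} :
    ssat (model M L) (chiS k) x ↔ x = up k ∨ (x = head k ∧ k ≠ 0) := by
  induction k generalizing x with
  | zero =>
    constructor
    · intro h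
      rw [chiS, ssat_ag] at h
      have hsucc : ∀ t, Step M L x t → IsP t := fun t hxt => ssat_p.1 (h t (.single hxt))
      have hx : IsP x := ssat_p.1 (h x .refl)
      cases x with
      | up k => cases k with
        | zero => simp
        | succ k => exact (hsucc _ (.up_down k)).elim
      | head m => exact (hsucc _ (.head_sink m)).elim
      | _ => exact hx.elim
    · rintro (rfl | ⟨-, h⟩)
      · exact ssat_ag_of_invariant (P := (· = up 0)) rfl (by rintro _ _ rfl ⟨⟩; rfl)
          (by rintro _ rfl; exact ssat_p.2 trivial)
      · exact absurd rfl h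
  | succ k ih =>
    simp only [chiS, ssat_conj, ssat_neg, ssat_ex, ssat_p, ih]
    constructor
    · rintro ⟨hx, t, hxt, ht, u, htu, hu⟩
      cases hxt <;> cases htu <;> simp_all [IsP]
    · rintro (rfl | ⟨rfl, -⟩)
      · exact ⟨trivial, down k, .up_down k, id, up k, .down_up k, .inl rfl⟩
      · exact ⟨trivial, down k, .head_down k, id, up k, .down_up k, .inl rfl⟩

theorem ssat_AformS {m : ℕ} {x : ChainState S} :
    ssat (model M L) (AformS m) x ↔ x = head m ∧ m ≠ 0 := by
  have hsink : ssat (model M L) (SF.ag (SF.neg (.var 0))) sink :=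
    ssat_ag_of_invariant (P := (· = sink)) rfl (by rintro _ _ rfl ⟨⟩; rfl)
      (by rintro _ rfl; exact ssat_neg.2 fun h => ssat_p.1 h)
  have hup : ∀ k, ¬ ssat (model M L) (SF.ag (SF.neg (.var 0))) (up k) := fun k h =>
    ssat_neg.1 (ssat_ag.1 h (up k) .refl) (ssat_p.2 trivial)
  have hdown : ∀ k, ¬ ssat (model M L) (SF.ag (SF.neg (.var 0))) (down k) := fun k h =>
    ssat_neg.1 (ssat_ag.1 h (up k) (.single (.down_up k))) (ssat_p.2 trivial)
  simp only [AformS, ssat_conj, ssat_chiS, ssat_ex]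
  constructor
  · rintro ⟨rfl | hx, t, hxt, ht⟩
    · cases hxt
      exacts [hdown _ ht |>.elim, hup _ ht |>.elim]
    · exact hx
  · rintro ⟨rfl, hm⟩
    exact ⟨.inr ⟨rfl, hm⟩, sink, .head_sink m, hsink⟩

theorem ssat_BformS {i : ℕ} {x : ChainState S} :
    ssat (model M L) (BformS i) x ↔ i ≠ 0 ∧ ∃ s, x = base s ∧ L i s := by
  simp only [BformS, ssat_ex, ssat_AformS]
  constructor
  · rintro ⟨_, hxt, rfl, hi⟩
    cases hxt with
    | enter h => exact ⟨hi, _, rfl, h⟩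
  · rintro ⟨hi, s, rfl, h⟩
    exact ⟨_, .enter h, rfl, hi⟩

theorem val_sigmaModel_model {n i : ℕ} (h1 : 1 ≤ i) (h2 : i ≤ n + 1) {x : ChainState S} :
    ((model M L).sigmaModel n).val i x ↔ ∃ s, x = base s ∧ L i s := by
  change ssat _ (sigmaS n (.var i)) x ↔ _
  rw [sigmaS, if_pos ⟨h1, h2⟩, ssat_BformS]
  exact and_iff_right (by omega)

def label (M : Kripke S) (n i : ℕ) (s : S) : Prop := i = n + 1 ∨ M.val i s

variable {n : ℕ}

theorem val_guard_sigmaModel_model {x : ChainState S} :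
    ((model M (label M n)).sigmaModel n).val (n + 1) x ↔ ∃ s, x = base s := by
  simp [val_sigmaModel_model, label]

theorem val_sigmaModel_model_base {i : ℕ} (h1 : 1 ≤ i) (h2 : i ≤ n) {s : S} :
    ((model M (label M n)).sigmaModel n).val i (base s) ↔ M.val i s := by
  simp only [val_sigmaModel_model h1 (by omega : i ≤ n + 1), label,
    or_iff_right (by omega : i ≠ n + 1)]
  exact ⟨fun ⟨_, hs, h⟩ => base.inj hs ▸ h, fun h => ⟨s, rfl, h⟩⟩

theorem ssat_thetaS_base {s : S} :
    ssat ((model M (label M n)).sigmaModel n) (ThetaS (n + 1)) (base s) := by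
  refine ssat_thetaS.2 ⟨val_guard_sigmaModel_model.2 ⟨s, rfl⟩, fun t _ => ?_⟩
  simp only [val_guard_sigmaModel_model]
  constructor
  · rintro ⟨_, htu, _, rfl⟩
    cases htu
    exact ⟨_, rfl⟩
  · rintro ⟨t, rfl⟩
    obtain ⟨u, htu⟩ := M.serial t
    exact ⟨_, .base htu, u, rfl⟩

theorem isGuardedMorphism_base :
    M.IsGuardedMorphism ((model M (label M n)).sigmaModel n) (n + 1) base where
  map_rel _ _ := .base
  lift_rel s u hsu hu := by
    obtain ⟨t, rfl⟩ := val_guard_sigmaModel_model.1 hu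
    cases hsu with
    | base hst => exact ⟨t, hst, rfl⟩
  val_guard _ := val_guard_sigmaModel_model.2 ⟨_, rfl⟩

theorem ssat_srel_base {φ : SF} (hvars : ∀ i, soccurs i φ → 1 ≤ i ∧ i ≤ n) {s : S}
    (hφ : ssat M φ s) :
    ssat ((model M (label M n)).sigmaModel n) (srel (n + 1) φ) (base s) :=
  (isGuardedMorphism_base.ssat_srel_iff φ
    (fun i hi _ => (val_sigmaModel_model_base (hvars i hi).1 (hvars i hi).2).symm) s).1 hφ

end ChainState

/-- A CTL* formula φ in variables p₁,…,pₙ is satisfiable iff the single-variable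
formula φ* = σ(Θ ∧ φ') is satisfiable, where σ(pᵢ) = Bᵢ = EX Aᵢ. -/
theorem ctlstar_single_variable_reduction (n : ℕ) (φ : SF)
    (hvars : ∀ q, soccurs q φ → 1 ≤ q ∧ q ≤ n) :
    ssatisfiable φ ↔
      ssatisfiable (sigmaS n (SF.conj (ThetaS (n + 1)) (srel (n + 1) φ))) := by
  constructor
  · rintro ⟨S, M, s, hs⟩
    exact ⟨_, _, ChainState.base s, (ssat_sigmaS n _ _ _).2 <|
      ssat_conj.2 ⟨ChainState.ssat_thetaS_base, ChainState.ssat_srel_base hvars hs⟩⟩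
  · rintro ⟨S, M, s, hs⟩
    obtain ⟨hΘ, hφ⟩ := ssat_conj.1 ((ssat_sigmaS n M _ s).1 hs)
    exact ssatisfiable_of_ssat_thetaS_srel hΘ hφ
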